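/- arXiv:1503.06684 — 2 statements merged into one kernel-verified Lean document; each statement's English description precedes it below -/
import Mathlib

section
/- Let γ > 1 be real. For every δ > 0 there exists a constant C_δ > 0 with the following property: for every measure space (X, 𝔐, μ) with μ(X) < ∞ and every measurable function ρ : X → [0,∞), the inequality ∫_X |ρ(x) − 1|^γ dμ(x) ≤ C_δ·∫_X P(ρ(x)) dμ(x) + δ^γ·μ(X) holds (the integrals being interpreted as integrals of nonnegative measurable functions, possibly infinite). -/
/-!
Write `P(r) = r^γ - 1 - γ (r - 1)`. It suffices to prove the pointwise bound
`|r - 1|^γ ≤ C P(r) + δ^γ` for `r ≥ 0` and integrate. Where `|r - 1| < δ` the term `δ^γ` takes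
care of everything. Otherwise, `P` is convex with `P(1) = 0`, so `P(1 + t (r - 1)) ≤ t P(r)`
for `t ∈ [0, 1]`. Taking `t = δ / |r - 1|` shows that `P(r) ≥ m |r - 1| / δ ≥ m`, where
`m = min (P(1 - δ)) (P(1 + δ)) > 0`. Then `|r - 1|^γ ≤ r^γ + 1 = P(r) + 2 + γ (r - 1)`, and
both the constant and the linear term are absorbed into a multiple of `P(r)`.
-/

open MeasureTheory

universe u

section PressurePotential

open Real

noncomputable def pressurePotential (γ r : ℝ) : ℝ := r ^ γ - 1 - γ * (r - 1)

variable {γ r : ℝ}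

theorem pressurePotential_nonneg (hγ : 1 ≤ γ) (hr : 0 ≤ r) : 0 ≤ pressurePotential γ r := by
  have h := one_add_mul_self_le_rpow_one_add (s := r - 1) (by linarith) hγ
  rw [add_sub_cancel] at h
  unfold pressurePotential
  linarith

theorem pressurePotential_pos (hγ : 1 < γ) (hr : 0 ≤ r) (hr1 : r ≠ 1) :
    0 < pressurePotential γ r := by
  have h := one_add_mul_self_lt_rpow_one_add (s := r - 1) (by linarith) (sub_ne_zero.2 hr1) hγ
  rw [add_sub_cancel] at h
  unfold pressurePotential
  linarith

theorem pressurePotential_one_add_mul_le (hγ : 1 ≤ γ) (hr : 0 ≤ r) {t : ℝ} (ht₀ : 0 ≤ t)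
    (ht₁ : t ≤ 1) : pressurePotential γ (1 + t * (r - 1)) ≤ t * pressurePotential γ r := by
  have h := (convexOn_rpow hγ).2 (Set.mem_Ici.2 hr) (Set.mem_Ici.2 zero_le_one) ht₀
    (sub_nonneg.2 ht₁) (add_sub_cancel t 1)
  simp only [smul_eq_mul, mul_one, one_rpow] at h
  unfold pressurePotential
  have hsplit : t * r + (1 - t) = 1 + t * (r - 1) := by ring
  rw [hsplit] at h
  linarith

theorem min_pressurePotential_mul_le {δ : ℝ} (hγ : 1 ≤ γ) (hδ : 0 < δ) (hr : 0 ≤ r)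
    (hδr : δ ≤ |r - 1|) :
    min (pressurePotential γ (1 - δ)) (pressurePotential γ (1 + δ)) * |r - 1|
      ≤ δ * pressurePotential γ r := by
  have hs : 0 < |r - 1| := hδ.trans_le hδr
  set t := δ / |r - 1| with ht
  have ht₁ : t ≤ 1 := (div_le_one hs).2 hδr
  have hscale : pressurePotential γ (1 + t * (r - 1)) * |r - 1| ≤ δ * pressurePotential γ r := by
    have h := pressurePotential_one_add_mul_le hγ hr (div_nonneg hδ.le hs.le) ht₁
    calc pressurePotential γ (1 + t * (r - 1)) * |r - 1|
        ≤ t * pressurePotential γ r * |r - 1| := mul_le_mul_of_nonneg_right h hs.le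
      _ = δ * pressurePotential γ r := by rw [ht]; field_simp
  rcases lt_or_ge r 1 with hr1 | hr1
  · have hpt : 1 + t * (r - 1) = 1 - δ := by
      have hne : r - 1 ≠ 0 := (sub_neg.2 hr1).ne
      rw [ht, abs_of_neg (sub_neg.2 hr1)]; field_simp; ring
    rw [hpt] at hscale
    exact (mul_le_mul_of_nonneg_right (min_le_left _ _) hs.le).trans hscale
  · have hpt : 1 + t * (r - 1) = 1 + δ := by
      have hne : r - 1 ≠ 0 := abs_pos.1 hs
      rw [ht, abs_of_nonneg (sub_nonneg.2 hr1), div_mul_cancel₀ _ hne]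
    rw [hpt] at hscale
    exact (mul_le_mul_of_nonneg_right (min_le_right _ _) hs.le).trans hscale

theorem abs_sub_one_rpow_le_rpow_add_one (hγ : 0 ≤ γ) (hr : 0 ≤ r) : |r - 1| ^ γ ≤ r ^ γ + 1 := by
  rcases lt_or_ge r 1 with hr1 | hr1
  · have h : |r - 1| ^ γ ≤ 1 :=
      rpow_le_one (abs_nonneg _) (by rw [abs_of_neg (sub_neg.2 hr1)]; linarith) hγ
    linarith [rpow_nonneg hr γ]
  · have h : |r - 1| ^ γ ≤ r ^ γ :=
      rpow_le_rpow (abs_nonneg _) (by rw [abs_of_nonneg (sub_nonneg.2 hr1)]; linarith) hγ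
    linarith

theorem exists_abs_sub_one_rpow_le_mul_pressurePotential {δ : ℝ} (hγ : 1 < γ) (hδ : 0 < δ)
    (hδ₁ : δ ≤ 1) :
    ∃ K : ℝ, 0 < K ∧ ∀ r : ℝ, 0 ≤ r → δ ≤ |r - 1| → |r - 1| ^ γ ≤ K * pressurePotential γ r := by
  set m := min (pressurePotential γ (1 - δ)) (pressurePotential γ (1 + δ))
  have hm : 0 < m := lt_min (pressurePotential_pos hγ (by linarith) (by linarith))
    (pressurePotential_pos hγ (by linarith) (by linarith))
  have hK : 0 < 1 + (2 + γ * δ) / m := by positivity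
  refine ⟨1 + (2 + γ * δ) / m, hK, fun r hr hδr => ?_⟩
  have hlin : m * |r - 1| ≤ δ * pressurePotential γ r :=
    (mul_comm m _).symm ▸ min_pressurePotential_mul_le hγ.le hδ hr hδr
  have hconst : m ≤ pressurePotential γ r :=
    le_of_mul_le_mul_left (by linarith [mul_le_mul_of_nonneg_left hδr hm.le]) hδ
  have habsorb : m * (2 + γ * |r - 1|) ≤ (2 + γ * δ) * pressurePotential γ r := by
    linarith [mul_le_mul_of_nonneg_left hlin (by linarith : (0 : ℝ) ≤ γ)]
  have hdiv : 2 + γ * |r - 1| ≤ (2 + γ * δ) / m * pressurePotential γ r := by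
    rw [div_mul_eq_mul_div, le_div_iff₀ hm]; linarith
  calc |r - 1| ^ γ
      ≤ r ^ γ + 1 := abs_sub_one_rpow_le_rpow_add_one (by linarith) hr
    _ = pressurePotential γ r + (2 + γ * (r - 1)) := by unfold pressurePotential; ring
    _ ≤ pressurePotential γ r + (2 + γ * |r - 1|) := by
        gcongr
        exact le_abs_self _
    _ ≤ pressurePotential γ r + (2 + γ * δ) / m * pressurePotential γ r := by gcongr
    _ = (1 + (2 + γ * δ) / m) * pressurePotential γ r := by ring

theorem exists_abs_sub_one_rpow_le_mul_pressurePotential_add {δ : ℝ} (hγ : 1 < γ) (hδ : 0 < δ) :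
    ∃ C : ℝ, 0 < C ∧ ∀ r : ℝ, 0 ≤ r → |r - 1| ^ γ ≤ C * pressurePotential γ r + δ ^ γ := by
  -- the far-field bound goes through `P(1 - δ)`, which needs `1 - δ ≥ 0`
  set δ' := min δ 1
  have hδ' : 0 < δ' := lt_min hδ one_pos
  obtain ⟨C, hC, hfar⟩ :=
    exists_abs_sub_one_rpow_le_mul_pressurePotential hγ hδ' (min_le_right _ _)
  refine ⟨C, hC, fun r hr => ?_⟩
  have hCP : 0 ≤ C * pressurePotential γ r :=
    mul_nonneg hC.le (pressurePotential_nonneg hγ.le hr)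
  rcases lt_or_ge |r - 1| δ' with hnear | hδr
  · have h : |r - 1| ^ γ ≤ δ ^ γ :=
      rpow_le_rpow (abs_nonneg _) (hnear.le.trans (min_le_left _ _)) (by linarith)
    linarith
  · linarith [hfar r hr hδr, rpow_nonneg hδ.le γ]

end PressurePotential

theorem lintegral_ofReal_le_of_le_mul_add {X : Type*} [MeasurableSpace X] (μ : Measure X)
    {f g : X → ℝ} {C c : ℝ} (hC : 0 ≤ C) (h : ∀ x, f x ≤ C * g x + c) :
    ∫⁻ x, ENNReal.ofReal (f x) ∂μ
      ≤ ENNReal.ofReal C * ∫⁻ x, ENNReal.ofReal (g x) ∂μ + ENNReal.ofReal c * μ Set.univ := by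
  calc ∫⁻ x, ENNReal.ofReal (f x) ∂μ
      ≤ ∫⁻ x, (ENNReal.ofReal C * ENNReal.ofReal (g x) + ENNReal.ofReal c) ∂μ := by
        refine lintegral_mono fun x => ?_
        rw [← ENNReal.ofReal_mul hC]
        exact (ENNReal.ofReal_le_ofReal (h x)).trans ENNReal.ofReal_add_le
    _ = ENNReal.ofReal C * ∫⁻ x, ENNReal.ofReal (g x) ∂μ + ENNReal.ofReal c * μ Set.univ := by
        rw [lintegral_add_right _ measurable_const, lintegral_const,
          lintegral_const_mul' _ _ ENNReal.ofReal_ne_top]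

/-- Let `γ > 1` be real and `P ρ = ρ^γ - 1 - γ*(ρ - 1)`. For every
`δ > 0` there exists `C_δ > 0` such that for every finite measure space `(X, 𝔐, μ)`
and every measurable `ρ : X → [0, ∞)`,
`∫ |ρ - 1|^γ dμ ≤ C_δ * ∫ P(ρ) dμ + δ^γ * μ(X)`,
the integrals being interpreted as (possibly infinite) integrals of nonnegative
measurable functions. -/
theorem integral_density_fluctuation_bound (γ : ℝ) (hγ : 1 < γ) :
    ∀ δ : ℝ, 0 < δ → ∃ C : ℝ, 0 < C ∧
      ∀ (X : Type u) [MeasurableSpace X] (μ : Measure X), IsFiniteMeasure μ →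
        ∀ ρ : X → ℝ, Measurable ρ → (∀ x, 0 ≤ ρ x) →
          (∫⁻ x, ENNReal.ofReal (|ρ x - 1| ^ γ) ∂μ) ≤
            ENNReal.ofReal C * (∫⁻ x, ENNReal.ofReal (ρ x ^ γ - 1 - γ * (ρ x - 1)) ∂μ)
              + ENNReal.ofReal (δ ^ γ) * μ Set.univ := by
  intro δ hδ
  obtain ⟨C, hC, hbound⟩ := exists_abs_sub_one_rpow_le_mul_pressurePotential_add hγ hδ
  exact ⟨C, hC, fun X _ μ _ ρ _ hρ =>
    lintegral_ofReal_le_of_le_mul_add μ hC.le fun x => hbound (ρ x) (hρ x)⟩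
end

section
/- Let X be a Polish space with a complete metric d and its Borel σ-algebra, let (Ω, 𝓕, ℙ) be a probability space, and let (Y_n)_{n∈ℕ} be a sequence of X-valued Borel random variables. Then the following are equivalent: (1) there exists an X-valued random variable Y such that for every ε > 0, ℙ(d(Y_n, Y) > ε) → 0 as n → ∞ (i.e. Y_n converges in probability); (2) for every pair of strictly increasing sequences (n_k), (m_k) of natural numbers there exists a subsequence (k_j) such that the joint laws of (Y_{n_{k_j}}, Y_{m_{k_j}}) on X × X converge weakly (i.e. integrals of every bounded continuous function on X × X converge) to a probability measure μ on X × X satisfying μ({(x, y) ∈ X × X : x = y}) = 1. -/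
/-!
If `Y n → Y` in probability, then so does every pair `(Y (n j), Y (m j)) → (Y, Y)`, hence also in
law, and the law of `(Y, Y)` lives on the diagonal. Conversely, by the portmanteau theorem a limit
law on the diagonal forces `ℙ(ε ≤ d(Y (n (k j)), Y (m (k j)))) → 0`; since this happens along a
further subsequence of any pair of subsequences, `(Y n)` is Cauchy in probability. A subsequence
with summable deviation probabilities converges almost surely by Borel–Cantelli and completeness,
and its limit is then the limit in probability of the whole sequence.
-/

open MeasureTheory Filter Topology ENNReal BoundedContinuousFunction

namespace MeasureTheory

variable {α ι E F : Type*} {m : MeasurableSpace α} {μ : Measure α}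

theorem tendstoInMeasure_iff_measure_lt_dist [PseudoMetricSpace E] {l : Filter ι}
    {f : ι → α → E} {g : α → E} :
    TendstoInMeasure μ f l g ↔
      ∀ ε, 0 < ε → Tendsto (fun i ↦ μ {x | ε < dist (f i x) (g x)}) l (𝓝 0) := by
  rw [tendstoInMeasure_iff_dist]
  refine ⟨fun h ε hε ↦ ?_, fun h ε hε ↦ ?_⟩
  · exact tendsto_of_tendsto_of_tendsto_of_le_of_le tendsto_const_nhds (h ε hε)
      (fun _ ↦ zero_le) fun _ ↦ measure_mono fun x (hx : ε < _) ↦ hx.le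
  · exact tendsto_of_tendsto_of_tendsto_of_le_of_le tendsto_const_nhds (h (ε / 2) (half_pos hε))
      (fun _ ↦ zero_le) fun _ ↦ measure_mono fun x (hx : ε ≤ _) ↦ (half_lt_self hε).trans_le hx

theorem TendstoInMeasure.prodMk [PseudoEMetricSpace E] [PseudoEMetricSpace F] {l : Filter ι}
    {f : ι → α → E} {g : α → E} {f' : ι → α → F} {g' : α → F}
    (hf : TendstoInMeasure μ f l g) (hf' : TendstoInMeasure μ f' l g') :
    TendstoInMeasure μ (fun i x ↦ (f i x, f' i x)) l (fun x ↦ (g x, g' x)) := by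
  intro ε hε
  have hsum := (hf ε hε).add (hf' ε hε)
  rw [add_zero] at hsum
  refine tendsto_of_tendsto_of_tendsto_of_le_of_le tendsto_const_nhds hsum (fun _ ↦ zero_le)
    fun i ↦ (measure_mono fun x hx ↦ ?_).trans (measure_union_le _ _)
  simpa only [Set.mem_ofPred_eq, Prod.edist_eq, le_max_iff, Set.mem_union] using hx

theorem ProbabilityMeasure.tendsto_map_iff_forall_integral_tendsto [TopologicalSpace E]
    [MeasurableSpace E] [OpensMeasurableSpace E] {l : Filter ι} [IsProbabilityMeasure μ]
    {f : ι → α → E} (hf : ∀ i, AEMeasurable (f i) μ) {ν : ProbabilityMeasure E} :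
    Tendsto (β := ProbabilityMeasure E)
        (fun i ↦ ⟨μ.map (f i), Measure.isProbabilityMeasure_map (hf i)⟩) l (𝓝 ν) ↔
      ∀ g : E →ᵇ ℝ, Tendsto (fun i ↦ ∫ x, g (f i x) ∂μ) l (𝓝 (∫ y, g y ∂(ν : Measure E))) := by
  refine ProbabilityMeasure.tendsto_iff_forall_integral_tendsto.trans (forall_congr' fun g ↦ ?_)
  simp only [ProbabilityMeasure.coe_mk,
    integral_map (hf _) g.continuous.aestronglyMeasurable]

theorem ProbabilityMeasure.tendsto_measure_of_isClosed_of_measure_eq_zero [TopologicalSpace E]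
    [MeasurableSpace E] [OpensMeasurableSpace E] [HasOuterApproxClosed E] {l : Filter ι}
    {ν : ProbabilityMeasure E} {νs : ι → ProbabilityMeasure E} (hν : Tendsto νs l (𝓝 ν))
    {s : Set E} (hs : IsClosed s) (hνs : (ν : Measure E) s = 0) :
    Tendsto (fun i ↦ (νs i : Measure E) s) l (𝓝 0) :=
  tendsto_of_le_liminf_of_limsup_le zero_le
    (hνs ▸ ProbabilityMeasure.limsup_measure_closed_le_of_tendsto hν hs)

theorem tendsto_measure_le_dist_of_tendsto_law_of_diagonal [PseudoMetricSpace E]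
    [MeasurableSpace E] [OpensMeasurableSpace (E × E)] {l : Filter ι} [IsProbabilityMeasure μ]
    {f f' : ι → α → E} (hff' : ∀ i, AEMeasurable (fun x ↦ (f i x, f' i x)) μ)
    {ν : ProbabilityMeasure (E × E)} (hν : Tendsto (β := ProbabilityMeasure (E × E))
      (fun i ↦ ⟨μ.map fun x ↦ (f i x, f' i x), Measure.isProbabilityMeasure_map (hff' i)⟩) l (𝓝 ν))
    (hdiag : (ν : Measure (E × E)) {p | p.1 = p.2} = 1) {ε : ℝ} (hε : 0 < ε) :
    Tendsto (fun i ↦ μ {x | ε ≤ dist (f i x) (f' i x)}) l (𝓝 0) := by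
  have hclosed : IsClosed {p : E × E | ε ≤ dist p.1 p.2} :=
    isClosed_le continuous_const continuous_dist
  have hdisj : Disjoint {p : E × E | p.1 = p.2} {p | ε ≤ dist p.1 p.2} :=
    Set.disjoint_left.2 fun p (hp : p.1 = p.2) (h : ε ≤ _) ↦ by
      rw [hp, dist_self] at h; linarith
  have hle := measure_union hdisj hclosed.measurableSet ▸ prob_le_one (μ := (ν : Measure (E × E)))
  rw [hdiag] at hle
  have hnull : (ν : Measure (E × E)) {p | ε ≤ dist p.1 p.2} = 0 :=
    le_antisymm ((ENNReal.add_le_add_iff_left one_ne_top).1 (by simpa using hle)) zero_le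
  have h := ProbabilityMeasure.tendsto_measure_of_isClosed_of_measure_eq_zero hν hclosed hnull
  simp only [ProbabilityMeasure.coe_mk,
    Measure.map_apply_of_aemeasurable (hff' _) hclosed.measurableSet] at h
  exact h

section CauchyInMeasure

variable [PseudoMetricSpace E]

def CauchyInMeasure (μ : Measure α) (f : ℕ → α → E) : Prop :=
  ∀ ε, 0 < ε → Tendsto (fun p : ℕ × ℕ ↦ μ {x | ε ≤ dist (f p.1 x) (f p.2 x)}) atTop (𝓝 0)

theorem cauchyInMeasure_of_forall_strictMono {f : ℕ → α → E}
    (h : ∀ ε, 0 < ε → ∀ n m : ℕ → ℕ, StrictMono n → StrictMono m → ∃ k : ℕ → ℕ,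
      Tendsto (fun j ↦ μ {x | ε ≤ dist (f (n (k j)) x) (f (m (k j)) x)}) atTop (𝓝 0)) :
    CauchyInMeasure μ f := by
  intro ε hε
  refine tendsto_of_subseq_tendsto fun ns hns ↦ ?_
  rw [← prod_atTop_atTop_eq] at hns
  obtain ⟨φ, hφ, hφ_fst⟩ := strictMono_subseq_of_tendsto_atTop (tendsto_fst.comp hns)
  obtain ⟨ψ, hψ, hψ_snd⟩ :=
    strictMono_subseq_of_tendsto_atTop ((tendsto_snd.comp hns).comp hφ.tendsto_atTop)
  obtain ⟨k, hk⟩ := h ε hε _ _ (hφ_fst.comp hψ) hψ_snd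
  exact ⟨φ ∘ ψ ∘ k, hk⟩

theorem ae_cauchySeq_of_tsum_measure_lt_dist_ne_top {f : ℕ → α → E} {c : ℕ → ℝ}
    (hc : Summable c) (h : ∑' j, μ {x | c j < dist (f j x) (f (j + 1) x)} ≠ ∞) :
    ∀ᵐ x ∂μ, CauchySeq fun j ↦ f j x := by
  filter_upwards [ae_eventually_notMem h] with x hx
  refine cauchySeq_of_summable_dist (hc.of_norm_bounded_eventually_nat ?_)
  filter_upwards [hx] with j hj
  simpa [abs_of_nonneg dist_nonneg] using hj

theorem CauchyInMeasure.exists_strictMono_ae_cauchySeq {f : ℕ → α → E}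
    (hf : CauchyInMeasure μ f) :
    ∃ φ : ℕ → ℕ, StrictMono φ ∧ ∀ᵐ x ∂μ, CauchySeq fun j ↦ f (φ j) x := by
  have hN : ∀ j : ℕ, ∃ N, ∀ p ≥ N, ∀ q ≥ p,
      μ {x | (1 / 2 : ℝ) ^ j ≤ dist (f p x) (f q x)} ≤ 2⁻¹ ^ j := fun j ↦ by
    have hδ : (0 : ℝ≥0∞) < 2⁻¹ ^ j := ENNReal.pow_pos (by simp) j
    obtain ⟨N, hN⟩ := eventually_atTop_prod_self'.1 <|
      (hf ((1 / 2 : ℝ) ^ j) (by positivity)).eventually (ge_mem_nhds hδ)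
    exact ⟨N, fun p hp q hq ↦ hN p hp q (hp.trans hq)⟩
  obtain ⟨φ, hφ, hφN⟩ := extraction_forall_of_eventually' hN
  refine ⟨φ, hφ, ae_cauchySeq_of_tsum_measure_lt_dist_ne_top summable_geometric_two ?_⟩
  refine ne_top_of_le_ne_top ?_ (ENNReal.tsum_le_tsum fun j ↦
    (measure_mono fun x (hx : (1 / 2 : ℝ) ^ j < _) ↦ hx.le).trans
      (hφN j (φ (j + 1)) (hφ.monotone j.le_succ)))
  simp [ENNReal.tsum_geometric, ENNReal.one_sub_inv_two]

theorem CauchyInMeasure.tendstoInMeasure_of_subseq {f : ℕ → α → E} {g : α → E}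
    (hf : CauchyInMeasure μ f) {φ : ℕ → ℕ} (hφ : Tendsto φ atTop atTop)
    (hfg : TendstoInMeasure μ (fun j ↦ f (φ j)) atTop g) : TendstoInMeasure μ f atTop g := by
  rw [tendstoInMeasure_iff_dist] at hfg ⊢
  intro ε hε
  rw [ENNReal.tendsto_nhds_zero]
  intro δ hδ
  obtain ⟨N, hN⟩ := eventually_atTop_prod_self'.1 <|
    (hf _ (half_pos hε)).eventually (ge_mem_nhds (ENNReal.half_pos hδ.ne'))
  obtain ⟨j, hj, hφj⟩ := (((hfg _ (half_pos hε)).eventually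
    (ge_mem_nhds (ENNReal.half_pos hδ.ne'))).and (hφ.eventually_ge_atTop N)).exists
  filter_upwards [eventually_ge_atTop N] with n hn
  calc μ {x | ε ≤ dist (f n x) (g x)}
      ≤ μ ({x | ε / 2 ≤ dist (f n x) (f (φ j) x)} ∪ {x | ε / 2 ≤ dist (f (φ j) x) (g x)}) := by
        refine measure_mono fun x (hx : ε ≤ _) ↦ ?_
        by_contra! hx'
        simp only [Set.mem_union, Set.mem_ofPred_eq, not_or, not_le] at hx'
        linarith [dist_triangle (f n x) (f (φ j) x) (g x)]
    _ ≤ δ / 2 + δ / 2 := (measure_union_le _ _).trans (add_le_add (hN n hn _ hφj) hj)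
    _ = δ := ENNReal.add_halves δ

theorem CauchyInMeasure.exists_tendstoInMeasure [CompleteSpace E] [MeasurableSpace E]
    [BorelSpace E] [IsFiniteMeasure μ] {f : ℕ → α → E} (hf : CauchyInMeasure μ f)
    (hf_meas : ∀ n, AEStronglyMeasurable (f n) μ) :
    ∃ g : α → E, Measurable g ∧ TendstoInMeasure μ f atTop g := by
  obtain ⟨φ, hφ, h_cauchy⟩ := hf.exists_strictMono_ae_cauchySeq
  obtain ⟨g, hg, h_lim⟩ := measurable_limit_of_tendsto_metrizable_ae
    (fun j ↦ (hf_meas (φ j)).aemeasurable) (h_cauchy.mono fun _ ↦ cauchySeq_tendsto_of_complete)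
  exact ⟨g, hg, hf.tendstoInMeasure_of_subseq hφ.tendsto_atTop
    (tendstoInMeasure_of_tendsto_ae (fun j ↦ hf_meas (φ j)) h_lim)⟩

end CauchyInMeasure

end MeasureTheory

/-- Gyöngy–Krylov characterization of convergence in probability on a
Polish space. A sequence `(Y_n)` of `X`-valued random variables converges in
probability to some random variable `Y` if and only if every pair of subsequences of
joint laws has a further subsequence converging weakly to a probability measure
concentrated on the diagonal. -/
theorem gyongy_krylov_polish
    {X : Type*} [MetricSpace X] [CompleteSpace X] [SecondCountableTopology X]
    [MeasurableSpace X] [BorelSpace X]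
    {Ω : Type*} [MeasurableSpace Ω] (P : Measure Ω) [IsProbabilityMeasure P]
    (Y : ℕ → Ω → X) (hY : ∀ n, Measurable (Y n)) :
    (∃ Ylim : Ω → X, Measurable Ylim ∧
      ∀ ε : ℝ, 0 < ε →
        Tendsto (fun n => P {ω | ε < dist (Y n ω) (Ylim ω)}) atTop (nhds 0)) ↔
    (∀ n m : ℕ → ℕ, StrictMono n → StrictMono m →
      ∃ k : ℕ → ℕ, StrictMono k ∧
        ∃ μ : Measure (X × X), IsProbabilityMeasure μ ∧
          μ {p : X × X | p.1 = p.2} = 1 ∧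
          ∀ g : BoundedContinuousFunction (X × X) ℝ,
            Tendsto (fun j => ∫ ω, g (Y (n (k j)) ω, Y (m (k j)) ω) ∂P) atTop
              (nhds (∫ p, g p ∂μ))) := by
  have hpair (n m : ℕ → ℕ) (j : ℕ) : AEMeasurable (fun ω ↦ (Y (n j) ω, Y (m j) ω)) P :=
    ((hY _).prodMk (hY _)).aemeasurable
  constructor
  · rintro ⟨Ylim, hYlim, hconv⟩ n m hn hm
    have hY_lim := tendstoInMeasure_iff_measure_lt_dist.2 hconv
    have hpair_lim : TendstoInMeasure P (fun j ω ↦ (Y (n j) ω, Y (m j) ω)) atTop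
        (fun ω ↦ (Ylim ω, Ylim ω)) :=
      (hY_lim.comp hn.tendsto_atTop).prodMk (hY_lim.comp hm.tendsto_atTop)
    refine ⟨id, strictMono_id, P.map fun ω ↦ (Ylim ω, Ylim ω),
      Measure.isProbabilityMeasure_map (hYlim.prodMk hYlim).aemeasurable, ?_,
      (ProbabilityMeasure.tendsto_map_iff_forall_integral_tendsto (hpair n m)).1
        (hpair_lim.tendstoInDistribution (hpair n m)).tendsto⟩
    rw [Measure.map_apply (hYlim.prodMk hYlim)
      (isClosed_eq continuous_fst continuous_snd).measurableSet]
    simp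
  · intro h
    have hcauchy : CauchyInMeasure P Y := cauchyInMeasure_of_forall_strictMono
      fun ε hε n m hn hm ↦ by
        obtain ⟨k, -, μ, hμ, hdiag, hint⟩ := h n m hn hm
        exact ⟨k, tendsto_measure_le_dist_of_tendsto_law_of_diagonal (hpair _ _)
          ((ProbabilityMeasure.tendsto_map_iff_forall_integral_tendsto (hpair _ _)
            (ν := ⟨μ, hμ⟩)).2 hint) hdiag hε⟩
    obtain ⟨Ylim, hYlim, hlim⟩ :=
      hcauchy.exists_tendstoInMeasure fun n ↦ (hY n).aestronglyMeasurable
    exact ⟨Ylim, hYlim, tendstoInMeasure_iff_measure_lt_dist.1 hlim⟩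
end
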